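/- For any two network spaces (X, μ, c_X) and (Y, ν, c_Y), the three distances are ordered: GW(μ, ν) ≤ GM(μ, ν) ≤ RGM(μ, ν), where each infimum over an empty set is +∞. -/

import Mathlib

open MeasureTheory
open scoped ENNReal

/-- The Gromov–Wasserstein distance between network spaces: the infimum over all couplings
`γ` of `μ` and `ν` of the quadratic discrepancy of the cost functions; `⊤` if there is no
coupling. -/
noncomputable def GW {X Y : Type*} [MeasurableSpace X] [MeasurableSpace Y]
    (μ : Measure X) (ν : Measure Y) (cX : X → X → ℝ) (cY : Y → Y → ℝ) : ℝ≥0∞ :=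
  ⨅ γ : {γ : Measure (X × Y) // γ.map Prod.fst = μ ∧ γ.map Prod.snd = ν},
    (∫⁻ q, ENNReal.ofReal ((cX q.1.1 q.2.1 - cY q.1.2 q.2.2) ^ 2)
        ∂((γ : Measure (X × Y)).prod (γ : Measure (X × Y)))) ^ (1 / 2 : ℝ)

/-- The Gromov–Monge distance between network spaces: the infimum over all Borel measurable
transport maps `T` with `T_# μ = ν`; `⊤` if there is no such map. -/
noncomputable def GM {X Y : Type*} [MeasurableSpace X] [MeasurableSpace Y]
    (μ : Measure X) (ν : Measure Y) (cX : X → X → ℝ) (cY : Y → Y → ℝ) : ℝ≥0∞ :=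
  ⨅ T : {T : X → Y // Measurable T ∧ μ.map T = ν},
    (∫⁻ q : X × X, ENNReal.ofReal ((cX q.1 q.2 - cY (T.val q.1) (T.val q.2)) ^ 2)
        ∂(μ.prod μ)) ^ (1 / 2 : ℝ)

/-- The cost functional appearing in the reversible Gromov–Monge distance. -/
noncomputable def RGMcost {X Y : Type*} [MeasurableSpace X] [MeasurableSpace Y]
    (μ : Measure X) (ν : Measure Y) (cX : X → X → ℝ) (cY : Y → Y → ℝ)
    (F : X → Y) (B : Y → X) : ℝ≥0∞ :=
  (∫⁻ z, ENNReal.ofReal ((cX z.1 (B z.2) - cY (F z.1) z.2) ^ 2) ∂(μ.prod ν)) ^ (1 / 2 : ℝ)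

/-- The reversible Gromov–Monge (RGM) distance; the infimum over the empty family is `⊤`. -/
noncomputable def RGM {X Y : Type*} [MeasurableSpace X] [MeasurableSpace Y]
    (μ : Measure X) (ν : Measure Y) (cX : X → X → ℝ) (cY : Y → Y → ℝ) : ℝ≥0∞ :=
  ⨅ p : {p : (X → Y) × (Y → X) // Measurable p.1 ∧ Measurable p.2 ∧
      μ.map (fun x => (x, p.1 x)) = ν.map (fun y => (p.2 y, y))},
    RGMcost μ ν cX cY p.val.1 p.val.2

/-!
A Borel transport map `T` yields the graph coupling `(Id, T)_# μ`, whose Gromov–Wasserstein cost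
is at most the Gromov–Monge cost of `T`; hence `GW ≤ GM`. If `(F, B) ∈ I(μ, ν)`, comparing the marginals
gives `F_# μ = ν`, and the set `{(x, y) | B y ≠ x}` is null for `(B, Id)_# ν`, hence for
`(Id, F)_# μ`, so `B ∘ F = id` holds `μ`-a.e. Writing `μ ⊗ ν = (Id × F)_# (μ ⊗ μ)`, the reversible
cost of `(F, B)` becomes the Gromov–Monge cost of `F`; hence `GM ≤ RGM`.
-/

noncomputable def GMcost {X Y : Type*} [MeasurableSpace X] (μ : Measure X)
    (cX : X → X → ℝ) (cY : Y → Y → ℝ) (T : X → Y) : ℝ≥0∞ :=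
  (∫⁻ q : X × X, ENNReal.ofReal ((cX q.1 q.2 - cY (T q.1) (T q.2)) ^ 2) ∂(μ.prod μ)) ^ (1 / 2 : ℝ)

section Graph

variable {X Y : Type*} [MeasurableSpace X] [MeasurableSpace Y] {μ : Measure X} {ν : Measure Y}
  {F : X → Y} {B : Y → X}

theorem map_eq_of_map_graph_eq (hB : Measurable B)
    (h : μ.map (fun x => (x, F x)) = ν.map (fun y => (B y, y))) : μ.map F = ν := by
  have hsnd := congrArg Measure.snd h
  rwa [Measure.snd_map_prodMk measurable_id', Measure.snd_map_prodMk hB, Measure.map_id'] at hsnd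

theorem ae_apply_apply_eq_of_map_graph_eq [MeasurableEq X] (hF : Measurable F)
    (hB : Measurable B) (h : μ.map (fun x => (x, F x)) = ν.map (fun y => (B y, y))) :
    ∀ᵐ x ∂μ, B (F x) = x := by
  have hS : MeasurableSet {q : X × Y | B q.2 = q.1}ᶜ :=
    (measurableSet_eq_fun (hB.comp measurable_snd) measurable_fst).compl
  rw [ae_iff]
  calc μ {x | ¬B (F x) = x}
      = μ.map (fun x => (x, F x)) {q : X × Y | B q.2 = q.1}ᶜ := by
        rw [Measure.map_apply (measurable_id'.prodMk hF) hS]; rfl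
    _ = ν.map (fun y => (B y, y)) {q : X × Y | B q.2 = q.1}ᶜ := by rw [h]
    _ = 0 := by
        rw [Measure.map_apply (hB.prodMk measurable_id') hS]; simp

end Graph

section Costs

variable {X Y : Type*} [MeasurableSpace X] [MeasurableSpace Y] (μ : Measure X) (ν : Measure Y)
  [SFinite μ] (cX : X → X → ℝ) (cY : Y → Y → ℝ)

theorem GW_le_GMcost {T : X → Y} (hT : Measurable T) (hTμ : μ.map T = ν) :
    GW μ ν cX cY ≤ GMcost μ cX cY T := by
  have hgraph : Measurable fun x => (x, T x) := measurable_id'.prodMk hT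
  have hfst : (μ.map fun x => (x, T x)).map Prod.fst = μ := by
    rw [← Measure.fst, Measure.fst_map_prodMk hT, Measure.map_id']
  have hsnd : (μ.map fun x => (x, T x)).map Prod.snd = ν := by
    rw [← Measure.snd, Measure.snd_map_prodMk measurable_id', hTμ]
  refine (iInf_le _ ⟨_, hfst, hsnd⟩).trans (ENNReal.rpow_le_rpow ?_ (by norm_num))
  rw [Measure.map_prod_map μ μ hgraph hgraph]
  exact lintegral_map_le _ _

theorem GW_le_GM : GW μ ν cX cY ≤ GM μ ν cX cY :=
  le_iInf fun T => GW_le_GMcost μ ν cX cY T.2.1 T.2.2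

variable {μ ν cX cY}

theorem GMcost_eq_RGMcost (hcX : Measurable (Function.uncurry cX))
    (hcY : Measurable (Function.uncurry cY)) {F : X → Y} {B : Y → X} (hF : Measurable F)
    (hB : Measurable B) (hFμ : μ.map F = ν) (hBF : ∀ᵐ x ∂μ, B (F x) = x) :
    GMcost μ cX cY F = RGMcost μ ν cX cY F B := by
  have hintegrand : Measurable fun z : X × Y =>
      ENNReal.ofReal ((cX z.1 (B z.2) - cY (F z.1) z.2) ^ 2) :=
    (((hcX.comp (measurable_fst.prodMk (hB.comp measurable_snd))).sub
      (hcY.comp ((hF.comp measurable_fst).prodMk measurable_snd))).pow_const 2).ennreal_ofReal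
  have hprod : μ.prod ν = (μ.prod μ).map (Prod.map id F) := by
    rw [← Measure.map_prod_map μ μ measurable_id hF, Measure.map_id, hFμ]
  have hBF' : ∀ᵐ q ∂μ.prod μ, B (F q.2) = q.2 := Measure.quasiMeasurePreserving_snd.ae hBF
  unfold GMcost RGMcost
  rw [hprod, lintegral_map hintegrand (measurable_id.prodMap hF)]
  congr 1
  refine lintegral_congr_ae ?_
  filter_upwards [hBF'] with q hq
  simp [hq]

theorem GM_le_RGM [MeasurableEq X] (hcX : Measurable (Function.uncurry cX))
    (hcY : Measurable (Function.uncurry cY)) : GM μ ν cX cY ≤ RGM μ ν cX cY := by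
  refine le_iInf fun ⟨⟨F, B⟩, hF, hB, h⟩ => ?_
  have hFμ := map_eq_of_map_graph_eq hB h
  calc GM μ ν cX cY ≤ GMcost μ cX cY F := iInf_le_of_le ⟨F, hF, hFμ⟩ le_rfl
    _ = RGMcost μ ν cX cY F B :=
      GMcost_eq_RGMcost hcX hcY hF hB hFμ (ae_apply_apply_eq_of_map_graph_eq hF hB h)

end Costs

theorem gw_le_gm_le_rgm_general
    {X Y : Type*}
    [MetricSpace X] [SecondCountableTopology X]
    [MeasurableSpace X] [BorelSpace X]
    [MeasurableSpace Y]
    (μ : Measure X) (ν : Measure Y)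
    [IsProbabilityMeasure μ]
    (cX : X → X → ℝ) (cY : Y → Y → ℝ)
    (hcX : Measurable (Function.uncurry cX)) (hcY : Measurable (Function.uncurry cY)) :
    GW μ ν cX cY ≤ GM μ ν cX cY ∧ GM μ ν cX cY ≤ RGM μ ν cX cY :=
  ⟨GW_le_GM μ ν cX cY, GM_le_RGM hcX hcY⟩

/-- For any two network spaces, `GW(μ, ν) ≤ GM(μ, ν) ≤ RGM(μ, ν)`. -/
theorem gw_le_gm_le_rgm
    {X Y : Type*}
    [MetricSpace X] [CompleteSpace X] [SecondCountableTopology X]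
    [MeasurableSpace X] [BorelSpace X]
    [MetricSpace Y] [CompleteSpace Y] [SecondCountableTopology Y]
    [MeasurableSpace Y] [BorelSpace Y]
    (μ : Measure X) (ν : Measure Y)
    [IsProbabilityMeasure μ] [IsProbabilityMeasure ν]
    [μ.IsOpenPosMeasure] [ν.IsOpenPosMeasure]
    (cX : X → X → ℝ) (cY : Y → Y → ℝ)
    (hcX : Measurable (Function.uncurry cX)) (hcY : Measurable (Function.uncurry cY)) :
    GW μ ν cX cY ≤ GM μ ν cX cY ∧ GM μ ν cX cY ≤ RGM μ ν cX cY :=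
  gw_le_gm_le_rgm_general μ ν cX cY hcX hcY
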